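/- arXiv:1405.3863 — 4 statements merged into one kernel-verified Lean document; each statement's English description precedes it below -/
import Mathlib

section
/- Fix j ∈ {1,…,m}. Let C ∈ ℤ^m satisfy ∂C = 0 with coordinates a_i such that a_j < 0 and a_i ≥ 0 for all i ≠ j, and set p := −a_j. Then: (i) there is a unique family (b_i)_{i≠j} of nonnegative integers with Σ_{i≠j} b_i (β_i − β_j) = C in ℤ^m, namely b_i = a_i for all i ≠ j, and it satisfies Σ_{i≠j} b_i = p; (ii) consequently, defining M_k(C) := Σ k!/(∏_{i≠j} b_i!) where the sum ranges over families (b_i)_{i≠j} of nonnegative integers with Σ_{i≠j} b_i = k and Σ_{i≠j} b_i (β_i − β_j) = C, one has M_k(C) = 0 for k ≠ p, M_p(C) = p!/(∏_{i≠j} a_i!), and Σ_{k≥1} ((−1)^{k−1}/k)·M_k(C) = −(−1)^p·(p−1)!/(∏_{i≠j} a_i!). -/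
open Finset

/-- The `i`-th standard basis vector `β_i` of `ℤ^m` (the basic disc class). -/
def basicDisc (m : ℕ) (i : Fin m) : Fin m → ℤ :=
  fun k => if k = i then 1 else 0

/-- The boundary map `∂ : ℤ^m → ℤ^n` sending the `i`-th standard basis vector `β i` to `v i`. -/
def bdry (n m : ℕ) (v : Fin m → Fin n → ℤ) : (Fin m → ℤ) →ₗ[ℤ] (Fin n → ℤ) where
  toFun C := fun l => ∑ i, C i * v i l
  map_add' C D := by
    funext l
    simp [add_mul, Finset.sum_add_distrib]
  map_smul' c C := by
    funext l
    simp [Finset.mul_sum, mul_assoc]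

/-- `M_k(C) = Σ k!/(∏_{i≠j} b_i!)`, summed over families `(b_i)_{i≠j}` of nonnegative
integers with `Σ_{i≠j} b_i = k` and `Σ_{i≠j} b_i (β_i − β_j) = C`
(encoded as functions `b : Fin m → ℕ` with `b j = 0`). -/
noncomputable def Mcount (m : ℕ) (j : Fin m) (C : Fin m → ℤ) (k : ℕ) : ℚ :=
  ∑ᶠ b : Fin m → ℕ,
    if b j = 0 ∧ (∑ i ∈ univ.erase j, b i) = k ∧
        (∑ i ∈ univ.erase j, (b i : ℤ) • (basicDisc m i - basicDisc m j)) = C then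
      (Nat.factorial k : ℚ) / ∏ i ∈ univ.erase j, (Nat.factorial (b i) : ℚ)
    else 0

lemma vecsum_apply (m : ℕ) (j : Fin m) (b : Fin m → ℕ) (l : Fin m) :
    (∑ i ∈ univ.erase j, (b i : ℤ) • (basicDisc m i - basicDisc m j)) l =
    if l = j then -(∑ i ∈ univ.erase j, (b i : ℤ)) else (b l : ℤ) := by
  rw [Finset.sum_apply]
  simp only [Pi.smul_apply, Pi.sub_apply, basicDisc, smul_eq_mul, mul_sub]
  rw [Finset.sum_sub_distrib]
  split_ifs with hl
  · subst hl
    have h1 : ∑ i ∈ univ.erase l, (b i : ℤ) * (if l = i then 1 else 0) = 0 := by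
      apply Finset.sum_eq_zero
      intro i hi
      rw [if_neg (fun h => (Finset.mem_erase.mp hi).1 h.symm), mul_zero]
    have h2 : ∑ i ∈ univ.erase l, (b i : ℤ) * (if l = l then 1 else 0)
        = ∑ i ∈ univ.erase l, (b i : ℤ) := by
      apply Finset.sum_congr rfl
      intro i hi
      rw [if_pos rfl, mul_one]
    rw [h1]; simp
  · have h1 : ∑ i ∈ univ.erase j, (b i : ℤ) * (if l = i then 1 else 0) = (b l : ℤ) := by
      rw [Finset.sum_eq_single_of_mem l (Finset.mem_erase.mpr ⟨hl, Finset.mem_univ l⟩)]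
      · rw [if_pos rfl, mul_one]
      · intro i hi hne
        rw [if_neg (fun h => hne h.symm), mul_zero]
    have h2 : ∑ i ∈ univ.erase j, (b i : ℤ) * (if l = j then 1 else 0) = 0 := by
      apply Finset.sum_eq_zero
      intro i hi
      rw [if_neg hl, mul_zero]
    rw [h1]; simp

lemma vecsum_eq_iff (m : ℕ) (j : Fin m) (C : Fin m → ℤ) (hsum : ∑ i, C i = 0)
    (b : Fin m → ℕ) :
    (∑ i ∈ univ.erase j, (b i : ℤ) • (basicDisc m i - basicDisc m j)) = C ↔
    ∀ i, i ≠ j → (b i : ℤ) = C i := by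
  constructor
  · intro h i hi
    have := congrFun h i
    rwa [vecsum_apply, if_neg hi] at this
  · intro h
    funext l
    rw [vecsum_apply]
    by_cases hl : l = j
    · subst hl
      rw [if_pos rfl]
      have h1 : ∑ i ∈ univ.erase l, (b i : ℤ) = ∑ i ∈ univ.erase l, C i :=
        Finset.sum_congr rfl fun i hi => h i (Finset.mem_erase.mp hi).1
      have h2 : ∑ i ∈ univ.erase l, C i = ∑ i, C i - C l :=
        Finset.sum_erase_eq_sub (Finset.mem_univ l)
      rw [h1, h2, hsum]; ring
    · rw [if_neg hl]; exact h l hl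

theorem stmt4 (n m : ℕ) (hn : 1 ≤ n) (hnm : n ≤ m)
    (v : Fin m → Fin n → ℤ)
    (hstd : ∀ (i : Fin m) (hi : (i : ℕ) < n),
      v i = fun l : Fin n => if (l : ℕ) = (i : ℕ) then (1 : ℤ) else 0)
    (ν : Fin n → ℤ) (hν : ∀ i, ∑ l, ν l * v i l = 1)
    (j : Fin m) (C : Fin m → ℤ)
    (hC : bdry n m v C = 0)
    (hj : C j < 0) (hpos : ∀ i, i ≠ j → 0 ≤ C i)
    (p : ℕ) (hp : (p : ℤ) = -C j) :
    -- (i) uniqueness of the family (b_i)_{i≠j} representing C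
    ((∃! b : Fin m → ℕ, b j = 0 ∧
        (∑ i ∈ univ.erase j, (b i : ℤ) • (basicDisc m i - basicDisc m j)) = C) ∧
      ((fun i => if i = j then 0 else (C i).toNat) j = 0 ∧
        (∑ i ∈ univ.erase j,
          (((fun i => if i = j then 0 else (C i).toNat) i : ℤ)) •
            (basicDisc m i - basicDisc m j)) = C) ∧
      (∑ i ∈ univ.erase j, (if i = j then 0 else (C i).toNat)) = p) ∧
    -- (ii) the counts M_k(C)
    ((∀ k : ℕ, k ≠ p → Mcount m j C k = 0) ∧
      Mcount m j C p =
        (Nat.factorial p : ℚ) / ∏ i ∈ univ.erase j, (Nat.factorial ((C i).toNat) : ℚ) ∧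
      (∑ᶠ k : ℕ, if 1 ≤ k then ((-1 : ℚ) ^ (k - 1) / k) * Mcount m j C k else 0) =
        -((-1 : ℚ) ^ p * (Nat.factorial (p - 1) : ℚ) /
          ∏ i ∈ univ.erase j, (Nat.factorial ((C i).toNat) : ℚ))) := by
  -- total sum of C is 0
  have h0 : ∀ l, ∑ i, C i * v i l = 0 := by
    intro l
    have := congrFun (congrArg (fun f => (f : (Fin n → ℤ))) hC) l
    simpa [bdry] using this
  have hsum : ∑ i, C i = 0 := by
    have key : ∀ i : Fin m, ∑ l, ν l * (C i * v i l) = C i := by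
      intro i
      have h1 : ∑ l, ν l * (C i * v i l) = C i * ∑ l, ν l * v i l := by
        rw [Finset.mul_sum]
        exact Finset.sum_congr rfl fun l _ => by ring
      rw [h1, hν, mul_one]
    calc ∑ i, C i = ∑ i, ∑ l, ν l * (C i * v i l) :=
          (Finset.sum_congr rfl fun i _ => (key i).symm)
      _ = ∑ l, ∑ i, ν l * (C i * v i l) := Finset.sum_comm
      _ = ∑ l : Fin n, ν l * ∑ i, C i * v i l := by
          exact Finset.sum_congr rfl fun l _ => (Finset.mul_sum _ _ _).symm
      _ = 0 := by simp [h0]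
  set b₀ : Fin m → ℕ := fun i => if i = j then 0 else (C i).toNat with hb₀
  have hb₀j : b₀ j = 0 := if_pos rfl
  have hb₀i : ∀ i, i ≠ j → (b₀ i : ℤ) = C i := by
    intro i hi
    simp only [hb₀, if_neg hi]
    exact Int.toNat_of_nonneg (hpos i hi)
  have hb₀vec : (∑ i ∈ univ.erase j, (b₀ i : ℤ) • (basicDisc m i - basicDisc m j)) = C :=
    (vecsum_eq_iff m j C hsum b₀).mpr hb₀i
  have huniq : ∀ b : Fin m → ℕ, b j = 0 →
      (∑ i ∈ univ.erase j, (b i : ℤ) • (basicDisc m i - basicDisc m j)) = C → b = b₀ := by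
    intro b hbj hbvec
    have h := (vecsum_eq_iff m j C hsum b).mp hbvec
    funext i
    by_cases hi : i = j
    · subst hi; rw [hbj, hb₀j]
    · have := (h i hi).trans (hb₀i i hi).symm
      exact_mod_cast this
  have hb₀p : (∑ i ∈ univ.erase j, b₀ i) = p := by
    have : ((∑ i ∈ univ.erase j, b₀ i : ℕ) : ℤ) = (p : ℤ) := by
      push_cast
      rw [Finset.sum_congr rfl fun i hi => hb₀i i (Finset.mem_erase.mp hi).1]
      have h2 : ∑ i ∈ univ.erase j, C i = ∑ i, C i - C j :=
        Finset.sum_erase_eq_sub (Finset.mem_univ j)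
      rw [h2, hsum, hp]; ring
    exact_mod_cast this
  have hp1 : 1 ≤ p := by
    rcases Nat.eq_zero_or_pos p with h | h
    · exfalso; rw [h] at hp; omega
    · exact h
  -- Mcount for k ≠ p is 0
  have hMzero : ∀ k : ℕ, k ≠ p → Mcount m j C k = 0 := by
    intro k hk
    apply finsum_eq_zero_of_forall_eq_zero
    intro b
    rw [if_neg]
    rintro ⟨hbj, hbk, hbvec⟩
    rw [huniq b hbj hbvec, hb₀p] at hbk
    exact hk hbk.symm
  have hprod : (∏ i ∈ univ.erase j, (Nat.factorial (b₀ i) : ℚ)) =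
      ∏ i ∈ univ.erase j, (Nat.factorial ((C i).toNat) : ℚ) := by
    apply Finset.prod_congr rfl
    intro i hi
    rw [hb₀]
    simp [if_neg (Finset.mem_erase.mp hi).1]
  have hMp : Mcount m j C p =
      (Nat.factorial p : ℚ) / ∏ i ∈ univ.erase j, (Nat.factorial ((C i).toNat) : ℚ) := by
    rw [Mcount, finsum_eq_single _ b₀]
    · rw [if_pos ⟨hb₀j, hb₀p, hb₀vec⟩, hprod]
    · intro b hb
      rw [if_neg]
      rintro ⟨hbj, _, hbvec⟩
      exact hb (huniq b hbj hbvec)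
  refine ⟨⟨⟨b₀, ⟨hb₀j, hb₀vec⟩, fun b hb => huniq b hb.1 hb.2⟩, ⟨hb₀j, hb₀vec⟩, hb₀p⟩,
    hMzero, hMp, ?_⟩
  rw [finsum_eq_single _ p]
  · rw [if_pos hp1, hMp]
    have hD : (∏ i ∈ univ.erase j, (Nat.factorial ((C i).toNat) : ℚ)) ≠ 0 :=
      Finset.prod_ne_zero_iff.mpr fun i _ => Nat.cast_ne_zero.mpr (Nat.factorial_ne_zero _)
    have hfac : (Nat.factorial p : ℚ) = (p : ℚ) * (Nat.factorial (p - 1) : ℚ) := by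
      have := Nat.mul_factorial_pred (Nat.pos_iff_ne_zero.mp (Nat.lt_of_lt_of_le Nat.zero_lt_one hp1))
      exact_mod_cast this.symm
    have hpow : (-1 : ℚ) ^ p = (-1 : ℚ) ^ (p - 1) * (-1) := by
      rw [← pow_succ]
      congr 1
      omega
    have hpne : (p : ℚ) ≠ 0 := Nat.cast_ne_zero.mpr (by omega)
    rw [hfac, hpow]
    field_simp
  · intro k hk
    by_cases h1 : 1 ≤ k
    · rw [if_pos h1, hMzero k hk, mul_zero]
    · rw [if_neg h1]
end

section
/- Fix j ∈ {1,…,m}. For every nonzero finitely supported family (a_i)_{i≠j} of nonnegative integers satisfying the balancing condition Σ_{i≠j} a_i (v_i − v_j) = 0 in ℤ^n, the coefficient of the monomial ∏_{i≠j} X_i^{a_i} in the formal logarithm L := Σ_{p≥1} ((−1)^{p−1}/p)·(Σ_{l≠j} X_l)^p (a well-defined multivariate power series over ℚ in the variables X_l, l ≠ j) equals −(−1)^{p}·(p−1)!/(∏_{i≠j} a_i!), where p := Σ_{i≠j} a_i; this is the negative of the coefficient of q̌^C in the hypergeometric series g_j, where C := Σ_{i≠j} a_i (C_i − C_j). -/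
open Finset

/-- The distinguished curve class `C_i = β_i - ∑_{l=1}^n v_{i,l} β_l ∈ ℤ^m`. -/
def curveClass (n m : ℕ) (v : Fin m → Fin n → ℤ) (i : Fin m) : Fin m → ℤ :=
  fun k => (if k = i then 1 else 0) - (if h : (k : ℕ) < n then v i ⟨k, h⟩ else 0)


lemma coeff_sum_X_pow {σ : Type*} [Fintype σ] [DecidableEq σ] (e : σ →₀ ℕ) (p : ℕ) :
    MvPowerSeries.coeff (R := ℚ) e ((∑ l : σ, (MvPowerSeries.X l : MvPowerSeries σ ℚ)) ^ p) =
      if ∑ l : σ, e l = p then (Nat.multinomial Finset.univ e : ℚ) else 0 := by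
  have h1 : (∑ l : σ, (MvPowerSeries.X l : MvPowerSeries σ ℚ)) ^ p =
      (((∑ l : σ, MvPolynomial.X l : MvPolynomial σ ℚ) ^ p : MvPolynomial σ ℚ) :
        MvPowerSeries σ ℚ) := by
    rw [MvPolynomial.coe_pow]
    congr 1
    rw [← MvPolynomial.coeToMvPowerSeries.ringHom_apply, map_sum]
    simp
  rw [h1, MvPolynomial.coeff_coe]
  rw [Finset.sum_pow_eq_sum_piAntidiag]
  rw [MvPolynomial.coeff_sum]
  have key : ∀ k : σ → ℕ, (∏ i : σ, (MvPolynomial.X i : MvPolynomial σ ℚ) ^ k i) =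
      MvPolynomial.monomial (Finsupp.equivFunOnFinite.symm k) 1 := by
    intro k
    set k' : σ →₀ ℕ := Finsupp.equivFunOnFinite.symm k with hk'
    have : (∏ i : σ, (MvPolynomial.X i : MvPolynomial σ ℚ) ^ k i) =
        ∏ i ∈ k'.support, MvPolynomial.X i ^ k' i := by
      rw [← Finset.prod_subset (Finset.subset_univ k'.support)]
      · rfl
      · intro x _ hx
        have : k' x = 0 := Finsupp.notMem_support_iff.mp hx
        rw [show k x = k' x from rfl, this, pow_zero]
    rw [this, MvPolynomial.prod_X_pow_eq_monomial]
  simp_rw [key]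
  by_cases hp : ∑ l : σ, e l = p
  · rw [if_pos hp]
    rw [Finset.sum_eq_single (⇑e)]
    · simp [← nsmul_eq_mul, MvPolynomial.coeff_smul, MvPolynomial.coeff_monomial]
    · intro k hk hne
      have : Finsupp.equivFunOnFinite.symm k ≠ e := by
        intro h; apply hne
        have h2 := congrArg Finsupp.equivFunOnFinite h
        simp at h2; exact h2
      simp [← nsmul_eq_mul, MvPolynomial.coeff_smul, MvPolynomial.coeff_monomial, this]
    · intro h
      exact absurd (Finset.mem_piAntidiag.mpr ⟨hp, fun i _ => Finset.mem_univ i⟩) h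
  · rw [if_neg hp]
    apply Finset.sum_eq_zero
    intro k hk
    have hk2 := (Finset.mem_piAntidiag.mp hk).1
    have : Finsupp.equivFunOnFinite.symm k ≠ e := by
      intro h
      apply hp
      rw [← hk2]
      exact Finset.sum_congr rfl fun i _ => by
        rw [show e i = (Finsupp.equivFunOnFinite.symm k) i from by rw [h]]; rfl
    simp [← nsmul_eq_mul, MvPolynomial.coeff_smul, MvPolynomial.coeff_monomial, this]

/-- The formal logarithm `L = Σ_{p≥1} ((−1)^{p−1}/p)·(Σ_{l≠j} X_l)^p`, a multivariate
formal power series over `ℚ` in the variables `X_l`, `l ≠ j`, defined coefficient-wise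
(for each exponent only finitely many summands contribute). -/
noncomputable def formalLog (m : ℕ) (j : Fin m) :
    MvPowerSeries {i : Fin m // i ≠ j} ℚ := fun e =>
  ∑ᶠ k : ℕ, MvPowerSeries.coeff (R := ℚ) e
    (((-1 : ℚ) ^ k / (k + 1)) •
      (∑ l : {i : Fin m // i ≠ j},
        (MvPowerSeries.X l : MvPowerSeries {i : Fin m // i ≠ j} ℚ)) ^ (k + 1))

theorem stmt5 (n m : ℕ) (hn : 1 ≤ n) (hnm : n ≤ m)
    (v : Fin m → Fin n → ℤ)
    (hstd : ∀ (i : Fin m) (hi : (i : ℕ) < n),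
      v i = fun l : Fin n => if (l : ℕ) = (i : ℕ) then (1 : ℤ) else 0)
    (ν : Fin n → ℤ) (hν : ∀ i, ∑ l, ν l * v i l = 1)
    (j : Fin m) (a : Fin m → ℕ)
    (hne : ∃ i, i ≠ j ∧ a i ≠ 0)
    (hbal : ∑ i ∈ univ.erase j, (a i : ℤ) • (v i - v j) = 0) :
    -- the family defining L is coefficient-wise summable
    (∀ e : {i : Fin m // i ≠ j} →₀ ℕ,
      (Function.support fun k : ℕ =>
        MvPowerSeries.coeff (R := ℚ) e
          (((-1 : ℚ) ^ k / (k + 1)) •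
            (∑ l : {i : Fin m // i ≠ j},
              (MvPowerSeries.X l : MvPowerSeries {i : Fin m // i ≠ j} ℚ)) ^ (k + 1))).Finite) ∧
    -- the coefficient of ∏_{i≠j} X_i^{a_i} in L is −(−1)^p (p−1)!/∏_{i≠j} a_i!
    MvPowerSeries.coeff (R := ℚ)
        (Finsupp.equivFunOnFinite.symm fun i : {i : Fin m // i ≠ j} => a i.val)
        (formalLog m j) =
      -((-1 : ℚ) ^ (∑ i ∈ univ.erase j, a i) *
          (Nat.factorial ((∑ i ∈ univ.erase j, a i) - 1) : ℚ) /
          ∏ i ∈ univ.erase j, (Nat.factorial (a i) : ℚ)) := by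
  classical
  set σ := {i : Fin m // i ≠ j}
  have hcoeff : ∀ (e : σ →₀ ℕ) (k : ℕ),
      MvPowerSeries.coeff (R := ℚ) e (((-1 : ℚ) ^ k / (k + 1)) •
        (∑ l : σ, (MvPowerSeries.X l : MvPowerSeries σ ℚ)) ^ (k + 1)) =
      ((-1 : ℚ) ^ k / (k + 1)) *
        (if ∑ l : σ, e l = k + 1 then (Nat.multinomial Finset.univ e : ℚ) else 0) := by
    intro e k
    rw [map_smul, smul_eq_mul, coeff_sum_X_pow]
  constructor
  · intro e
    apply Set.Finite.subset (Set.finite_singleton (∑ l : σ, e l - 1))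
    intro k hk
    simp only [Function.mem_support] at hk
    rw [hcoeff] at hk
    by_contra hne'
    apply hk
    rw [if_neg, mul_zero]
    intro h
    exact hne' (Set.mem_singleton_iff.mpr (by omega))
  · set e : σ →₀ ℕ := Finsupp.equivFunOnFinite.symm fun i : σ => a i.val with he
    set p : ℕ := ∑ i ∈ univ.erase j, a i with hp
    have hsub : ∀ x : Fin m, x ∈ univ.erase j ↔ x ≠ j := by
      intro x; simp [Finset.mem_erase]
    have hsum : ∑ l : σ, e l = p := by
      rw [hp, Finset.sum_subtype (univ.erase j) hsub a]
      rfl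
    have hp1 : 1 ≤ p := by
      obtain ⟨i, hij, hai⟩ := hne
      calc 1 ≤ a i := Nat.one_le_iff_ne_zero.mpr hai
        _ ≤ p := Finset.single_le_sum (f := a) (fun _ _ => Nat.zero_le _)
          (by rw [hsub]; exact hij)
    have hLog : MvPowerSeries.coeff (R := ℚ) e (formalLog m j) =
        ∑ᶠ k : ℕ, MvPowerSeries.coeff (R := ℚ) e
          (((-1 : ℚ) ^ k / (k + 1)) •
            (∑ l : σ, (MvPowerSeries.X l : MvPowerSeries σ ℚ)) ^ (k + 1)) := rfl
    rw [hLog, finsum_eq_single _ (p - 1)]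
    swap
    · intro k hk
      rw [hcoeff, if_neg, mul_zero]
      rw [hsum]; omega
    rw [hcoeff, hsum, if_pos (by omega)]
    have hprod : ∏ i ∈ univ.erase j, (Nat.factorial (a i) : ℚ) =
        (∏ l : σ, Nat.factorial (e l) : ℕ) := by
      push_cast
      rw [Finset.prod_subtype (univ.erase j) hsub (fun i => (Nat.factorial (a i) : ℚ))]
      rfl
    have hmult := Nat.multinomial_spec (univ : Finset σ) e
    rw [hsum, mul_comm] at hmult
    have hfac : (p : ℚ) * Nat.factorial (p - 1) = Nat.factorial p := by
      exact_mod_cast congrArg (Nat.cast : ℕ → ℚ) (Nat.mul_factorial_pred (by omega))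
    have hprodne : (∏ l : σ, Nat.factorial (e l) : ℚ) ≠ 0 := by
      push_cast
      exact Finset.prod_ne_zero_iff.mpr fun l _ => Nat.cast_ne_zero.mpr (Nat.factorial_ne_zero _)
    have hpne : ((p : ℚ) - 1) + 1 ≠ 0 := by
      have : (0:ℚ) < p := by exact_mod_cast hp1
      linarith
    have hcast : ((p - 1 : ℕ) : ℚ) + 1 = p := by
      have : ((p - 1 : ℕ) : ℚ) = (p : ℚ) - 1 := by
        push_cast [hp1]; ring
      rw [this]; ring
    rw [hcast]
    have hmq : (Nat.multinomial Finset.univ e : ℚ) =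
        (Nat.factorial p : ℚ) / (∏ l : σ, Nat.factorial (e l) : ℕ) := by
      field_simp
      exact_mod_cast congrArg (Nat.cast : ℕ → ℚ) hmult
    rw [hmq, hprod]
    have hppow : (-1 : ℚ) ^ (p - 1) = -(-1 : ℚ) ^ p := by
      conv_rhs => rw [show p = (p - 1) + 1 by omega]
      rw [pow_succ]; ring
    rw [hppow]
    have hpq : (p : ℚ) ≠ 0 := by positivity
    field_simp
    rw [← hfac]
end

section
/- In the ring ℚ[[t]] of formal power series over ℚ, let g := Σ_{l≥1} ((2l−1)!/(l!)²)·t^l. Then exp(g) = 1 + t·exp(2g). Equivalently, exp(g) is the generating function of the Catalan numbers. -/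
open PowerSeries

/-- Substitution of a power series `h` with zero constant term into a power series `f`:
`(psubst h f) = f(h) = Σ_k (coeff k f)·h^k`, defined coefficient-wise (only the terms with
`k ≤ n` contribute to the `n`-th coefficient, since `h` has zero constant term). -/
noncomputable def psubst (h f : PowerSeries ℚ) : PowerSeries ℚ :=
  PowerSeries.mk fun n =>
    ∑ k ∈ Finset.range (n + 1), PowerSeries.coeff (R := ℚ) k f * PowerSeries.coeff (R := ℚ) n (h ^ k)

/-- `exp(w)` for a power series `w` with zero constant term. -/
noncomputable def pexp (w : PowerSeries ℚ) : PowerSeries ℚ :=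
  psubst w (PowerSeries.exp ℚ)

/-- The hypergeometric series `g = Σ_{l≥1} ((2l−1)!/(l!)²)·t^l` for `K_{ℙ¹}`. -/
noncomputable def gKP1 : PowerSeries ℚ :=
  PowerSeries.mk fun l =>
    if l = 0 then 0
    else (Nat.factorial (2 * l - 1) : ℚ) / ((Nat.factorial l : ℚ) * (Nat.factorial l : ℚ))

section
open Finset

noncomputable def CC : ℚ⟦X⟧ := PowerSeries.mk fun n => (catalan n : ℚ)
noncomputable def BB : ℚ⟦X⟧ := PowerSeries.mk fun n => (Nat.centralBinom n : ℚ)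

lemma hCC : CC = 1 + X * CC ^ 2 := by
  ext n
  cases n with
  | zero => simp [CC]
  | succ n =>
    rw [map_add, coeff_succ_X_mul, sq, coeff_mul]
    simp only [CC, coeff_mk, catalan_succ' n]
    push_cast
    simp [PowerSeries.coeff_one]

lemma two_ne' : (2 : ℚ⟦X⟧) ≠ 0 := fun h => by
  have := congrArg (constantCoeff (R := ℚ)) h
  rw [map_ofNat, map_zero] at this; norm_num at this

lemma hBode : (1 - 4 * X) * (d⁄dX ℚ) BB = 2 * BB := by
  have h4 : (4 : ℚ⟦X⟧) = PowerSeries.C (R := ℚ) 4 := (map_ofNat (PowerSeries.C (R := ℚ)) 4).symm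
  have h2 : (2 : ℚ⟦X⟧) = PowerSeries.C (R := ℚ) 2 := (map_ofNat (PowerSeries.C (R := ℚ)) 2).symm
  ext n
  rw [sub_mul, one_mul, map_sub, h4, h2, mul_assoc, coeff_C_mul, coeff_C_mul]
  cases n with
  | zero =>
    simp [BB, coeff_derivative, Nat.centralBinom]
  | succ n =>
    rw [coeff_succ_X_mul, coeff_derivative, coeff_derivative]
    simp only [BB, coeff_mk]
    have key' : ((n+2 : ℕ) : ℚ) * (Nat.centralBinom (n+2) : ℚ)
        = 2 * (2*(n+1)+1) * Nat.centralBinom (n+1) := by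
      exact_mod_cast Nat.succ_mul_centralBinom_succ (n+1)
    push_cast at key' ⊢
    ring_nf at key' ⊢
    linarith

-- ODE uniqueness
lemma ode_unique {a f h : ℚ⟦X⟧} (hf : (d⁄dX ℚ) f = a * f) (hh : (d⁄dX ℚ) h = a * h)
    (h0 : PowerSeries.coeff (R := ℚ) 0 f = PowerSeries.coeff (R := ℚ) 0 h) : f = h := by
  ext n
  induction n using Nat.strong_induction_on with
  | _ n ih =>
    match n with
    | 0 => exact h0
    | n + 1 =>
      have e1 : PowerSeries.coeff (R := ℚ) (n+1) f * (n+1) = PowerSeries.coeff (R := ℚ) (n+1) h * (n+1) := by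
        rw [← coeff_derivative, ← coeff_derivative, hf, hh, coeff_mul, coeff_mul]
        refine Finset.sum_congr rfl fun p hp => ?_
        rw [ih p.2 (Nat.lt_succ_of_le (Finset.HasAntidiagonal.antidiagonal.snd_le hp))]
      have : ((n:ℚ)+1) ≠ 0 := by positivity
      exact mul_right_cancel₀ this e1

noncomputable def FF (w : ℚ⟦X⟧) (N : ℕ) : ℚ⟦X⟧ :=
  ∑ k ∈ Finset.range (N+1), ((k.factorial : ℚ))⁻¹ • w ^ k

lemma coeff_pow_zero {w : ℚ⟦X⟧} (hw : constantCoeff (R := ℚ) w = 0) {n k : ℕ} (h : n < k) :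
    PowerSeries.coeff (R := ℚ) n (w ^ k) = 0 := by
  obtain ⟨f, hf⟩ := (X_dvd_iff.mpr hw)
  rw [hf, mul_pow, coeff_X_pow_mul', if_neg (by omega)]

lemma coeff_pexp {w : ℚ⟦X⟧} (hw : constantCoeff (R := ℚ) w = 0) {n N : ℕ} (h : n ≤ N) :
    PowerSeries.coeff (R := ℚ) n (pexp w) = PowerSeries.coeff (R := ℚ) n (FF w N) := by
  rw [pexp, psubst, coeff_mk, FF, map_sum]
  rw [Finset.sum_subset (Finset.range_subset_range.mpr (by omega) :
    Finset.range (n+1) ⊆ Finset.range (N+1))]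
  · refine Finset.sum_congr rfl fun k _ => ?_
    rw [coeff_smul, coeff_exp, smul_eq_mul]
    norm_num
  · intro k hk hk'
    rw [coeff_pow_zero hw (by simp at hk hk'; omega), mul_zero]

lemma constantCoeff_pexp (w : ℚ⟦X⟧) : PowerSeries.coeff (R := ℚ) 0 (pexp w) = 1 := by
  rw [pexp, psubst, coeff_mk]
  simp [coeff_exp]

lemma dFF (w : ℚ⟦X⟧) (N : ℕ) : (d⁄dX ℚ) (FF w (N+1)) = (d⁄dX ℚ) w * FF w N := by
  rw [FF, map_sum, Finset.sum_range_succ']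
  have h0 : (d⁄dX ℚ) ((((0:ℕ).factorial : ℚ))⁻¹ • w ^ 0) = 0 := by simp
  rw [h0, add_zero, FF, Finset.mul_sum]
  refine Finset.sum_congr rfl fun i _ => ?_
  rw [Derivation.map_smul, Derivation.leibniz_pow, Nat.add_sub_cancel,
    ← Nat.cast_smul_eq_nsmul ℚ, smul_smul, smul_eq_mul, mul_smul_comm]
  congr 1
  · rw [Nat.factorial_succ]
    push_cast
    have h1 : ((i.factorial : ℚ)) ≠ 0 := by positivity
    have h2 : ((i:ℚ)+1) ≠ 0 := by positivity
    field_simp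
  · exact mul_comm _ _

lemma dpexp {w : ℚ⟦X⟧} (hw : constantCoeff (R := ℚ) w = 0) :
    (d⁄dX ℚ) (pexp w) = (d⁄dX ℚ) w * pexp w := by
  ext n
  rw [coeff_derivative, coeff_pexp hw (le_refl (n+1)), ← coeff_derivative, dFF,
    coeff_mul, coeff_mul]
  refine Finset.sum_congr rfl fun p hp => ?_
  rw [coeff_pexp hw (Finset.HasAntidiagonal.antidiagonal.snd_le hp)]

lemma hBU_aux (U : ℚ⟦X⟧) (hU2 : U ^ 2 = 1 - 4 * X) (hU0 : constantCoeff (R := ℚ) U = 1) :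
    BB * U = 1 := by
  have h4C : (4 : ℚ⟦X⟧) = PowerSeries.C (R := ℚ) 4 := (map_ofNat (PowerSeries.C (R := ℚ)) 4).symm
  have hR : (d⁄dX ℚ) (1 - (4:ℚ⟦X⟧) * X) = -4 := by
    rw [map_sub, Derivation.map_one_eq_zero, h4C, Derivation.leibniz, derivative_X,
      derivative_C, smul_eq_mul, smul_eq_mul]
    ring
  have hdU2 : U * (d⁄dX ℚ) U + U * (d⁄dX ℚ) U = -4 := by
    rw [← hR, ← hU2, sq, Derivation.leibniz, smul_eq_mul]
  have hUdU : U * (d⁄dX ℚ) U = -2 := by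
    apply mul_left_cancel₀ two_ne'
    rw [show (2:ℚ⟦X⟧) * (U * (d⁄dX ℚ) U) = U * (d⁄dX ℚ) U + U * (d⁄dX ℚ) U by ring, hdU2]
    ring
  have hL : (d⁄dX ℚ) (BB * U) = BB * (d⁄dX ℚ) U + U * (d⁄dX ℚ) BB := by
    rw [Derivation.leibniz, smul_eq_mul, smul_eq_mul]
  have hUne : U ≠ 0 := by
    intro h
    rw [h, map_zero] at hU0
    norm_num at hU0
  have hzero : U * (d⁄dX ℚ) (BB * U) = 0 := by
    rw [hL]
    linear_combination BB * hUdU + (d⁄dX ℚ) BB * hU2 + hBode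
  have hdBU : (d⁄dX ℚ) (BB * U) = 0 := by
    rcases mul_eq_zero.mp hzero with h | h
    · exact absurd h hUne
    · exact h
  refine ode_unique (a := 0) (by rw [hdBU, zero_mul]) (by rw [Derivation.map_one_eq_zero, zero_mul]) ?_
  simp only [coeff_zero_eq_constantCoeff, map_mul, map_one, hU0, mul_one]
  simp [BB, Nat.centralBinom]

lemma hBU : BB * (1 - 2 * X * CC) = 1 := by
  have hXC2 : X * CC ^ 2 = CC - 1 := by linear_combination -hCC
  refine hBU_aux _ ?_ ?_
  · calc (1 - 2*X*CC) ^ 2 = 1 - 4*X*CC + 4*X*(X*CC^2) := by ring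
    _ = 1 - 4*X*CC + 4*X*(CC-1) := by rw [hXC2]
    _ = 1 - 4*X := by ring
  · simp

lemma h2Xdg : (2:ℚ⟦X⟧) * X * ((d⁄dX ℚ) gKP1) = BB - 1 := by
  have h2C : (2 : ℚ⟦X⟧) = PowerSeries.C (R := ℚ) 2 := (map_ofNat (PowerSeries.C (R := ℚ)) 2).symm
  ext n
  rw [mul_assoc, h2C, coeff_C_mul, map_sub]
  cases n with
  | zero => simp [BB, gKP1, Nat.centralBinom]
  | succ n =>
    rw [coeff_succ_X_mul, coeff_derivative]
    simp only [BB, gKP1, coeff_mk, PowerSeries.coeff_one]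
    rw [if_neg (Nat.succ_ne_zero n), if_neg (Nat.succ_ne_zero n)]
    have e1 : 2 * (n+1) - 1 = 2*n+1 := by omega
    have e2 : 2 * (n+1) = 2*n+2 := by omega
    rw [e1]
    rw [sub_zero]
    have hcb : (Nat.centralBinom (n+1) : ℚ) * ((n+1).factorial * (n+1).factorial)
        = ((2*n+2).factorial : ℚ) := by
      have := Nat.choose_mul_factorial_mul_factorial (show n+1 ≤ 2*(n+1) by omega)
      rw [show 2*(n+1) - (n+1) = n+1 by omega] at this
      rw [Nat.centralBinom, e2] at *
      push_cast [← this]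
      ring
    have hfac : ((2*n+2).factorial : ℚ) = (2*(n:ℚ)+2) * ((2*n+1).factorial : ℚ) := by
      have h := Nat.factorial_succ (2*n+1)
      rw [show 2*n+1+1 = 2*n+2 by omega] at h
      rw [h]
      push_cast
      ring
    have h1 : ((n+1).factorial : ℚ) ≠ 0 := by positivity
    field_simp
    linear_combination -hcb - hfac

lemma X_ne' : (X : ℚ⟦X⟧) ≠ 0 := X_ne_zero

lemma hdg : (d⁄dX ℚ) gKP1 = BB * CC := by
  have h1 : (2:ℚ⟦X⟧) * X * (BB * CC) = BB - 1 := by linear_combination -hBU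
  exact mul_left_cancel₀ (mul_ne_zero two_ne' X_ne') (h2Xdg.trans h1.symm)

lemma hdCC : (d⁄dX ℚ) CC = (d⁄dX ℚ) gKP1 * CC := by
  have h0 := congrArg (d⁄dX ℚ) hCC
  rw [map_add, Derivation.map_one_eq_zero, zero_add, Derivation.leibniz, derivative_X] at h0
  simp only [sq, Derivation.leibniz, smul_eq_mul] at h0
  have hU' : (1 - 2*X*CC) * (d⁄dX ℚ) CC = CC^2 := by
    rw [sq]; linear_combination h0
  calc (d⁄dX ℚ) CC = (BB * (1 - 2*X*CC)) * (d⁄dX ℚ) CC := by rw [hBU, one_mul]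
  _ = BB * ((1 - 2*X*CC) * (d⁄dX ℚ) CC) := by ring
  _ = BB * CC^2 := by rw [hU']
  _ = (BB * CC) * CC := by ring
  _ = (d⁄dX ℚ) gKP1 * CC := by rw [hdg]

lemma hg0 : constantCoeff (R := ℚ) gKP1 = 0 := by
  rw [← coeff_zero_eq_constantCoeff]
  simp [gKP1]

lemma hd2g : (d⁄dX ℚ) (2 * gKP1) = 2 * (d⁄dX ℚ) gKP1 := by
  have h2C : (2 : ℚ⟦X⟧) = PowerSeries.C (R := ℚ) 2 := (map_ofNat (PowerSeries.C (R := ℚ)) 2).symm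
  rw [Derivation.leibniz, smul_eq_mul, smul_eq_mul, h2C, derivative_C]
  ring

theorem stmt8 :
    pexp gKP1 = 1 + PowerSeries.X * pexp (2 * gKP1) ∧
    pexp gKP1 = PowerSeries.mk fun n => (catalan n : ℚ) := by
  have hE : pexp gKP1 = CC := by
    refine ode_unique (a := (d⁄dX ℚ) gKP1) (dpexp hg0) hdCC ?_
    rw [constantCoeff_pexp]
    simp [CC]
  have h2g0 : constantCoeff (R := ℚ) (2 * gKP1) = 0 := by rw [map_mul, hg0, mul_zero]
  have hE2 : pexp (2 * gKP1) = CC ^ 2 := by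
    refine ode_unique (a := (d⁄dX ℚ) (2 * gKP1)) (dpexp h2g0) ?_ ?_
    · rw [sq, Derivation.leibniz, smul_eq_mul, hdCC, hd2g]
      ring
    · rw [constantCoeff_pexp]
      simp [CC, sq, coeff_mul]
  exact ⟨by rw [hE, hE2, ← hCC], hE.trans rfl⟩

end
end

section
/- Let g := Σ_{l≥1} ((2l−1)!/(l!)²)·t^l ∈ ℚ[[t]]. There exists a unique formal power series h ∈ ℚ[[q]] with zero constant term satisfying h·exp(2·(g∘h)) = q, where g∘h denotes substitution of h into g; and for this h one has exp(g∘h) = 1 + q in ℚ[[q]]. -/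
open PowerSeries

namespace Stmt9

lemma coeff_pow_of_lt {h : PowerSeries ℚ} (hh : constantCoeff (R := ℚ) h = 0) {n k : ℕ} (hnk : n < k) :
    coeff (R := ℚ) n (h ^ k) = 0 := by
  have hd : (X : ℚ⟦X⟧) ^ k ∣ h ^ k := pow_dvd_pow_of_dvd (X_dvd_iff.mpr hh) k
  exact X_pow_dvd_iff.mp hd n hnk

lemma coeff_psubst {h : PowerSeries ℚ} (hh : constantCoeff (R := ℚ) h = 0) (f : PowerSeries ℚ)
    {n N : ℕ} (hn : n < N) :
    coeff (R := ℚ) n (psubst h f) = ∑ k ∈ Finset.range N, coeff (R := ℚ) k f * coeff (R := ℚ) n (h ^ k) := by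
  rw [psubst, coeff_mk]
  refine Finset.sum_subset (Finset.range_subset_range.mpr hn) ?_
  intro k _ hk'
  have : n < k := by simpa using hk'
  rw [coeff_pow_of_lt hh this, mul_zero]

lemma constantCoeff_psubst {h : PowerSeries ℚ} (hh : constantCoeff (R := ℚ) h = 0) (f : PowerSeries ℚ) :
    constantCoeff (R := ℚ) (psubst h f) = constantCoeff (R := ℚ) f := by
  rw [← coeff_zero_eq_constantCoeff_apply, ← coeff_zero_eq_constantCoeff_apply, psubst, coeff_mk]
  simp

lemma psubst_add {h : PowerSeries ℚ} (f g : PowerSeries ℚ) :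
    psubst h (f + g) = psubst h f + psubst h g := by
  ext n
  simp [psubst, add_mul, Finset.sum_add_distrib]

lemma psubst_one (h : PowerSeries ℚ) : psubst h 1 = 1 := by
  ext n
  rw [psubst, coeff_mk, Finset.sum_eq_single 0]
  · simp
  · intro k _ hk
    simp [coeff_one, hk]
  · simp

lemma psubst_X {h : PowerSeries ℚ} (hh : constantCoeff (R := ℚ) h = 0) : psubst h X = h := by
  ext n
  rw [coeff_psubst hh X (show n < n + 2 by omega), Finset.sum_eq_single 1]
  · simp
  · intro k _ hk
    simp [coeff_X, hk]
  · simp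

lemma psubst_mul {h : PowerSeries ℚ} (hh : constantCoeff (R := ℚ) h = 0) (f g : PowerSeries ℚ) :
    psubst h (f * g) = psubst h f * psubst h g := by
  ext n
  have key : ∀ i j : ℕ, (∑ p ∈ Finset.HasAntidiagonal.antidiagonal n, coeff (R := ℚ) p.1 (h ^ i) * coeff (R := ℚ) p.2 (h ^ j))
      = coeff (R := ℚ) n (h ^ (i + j)) := by
    intro i j
    rw [pow_add, PowerSeries.coeff_mul]
  -- RHS
  have hR : coeff (R := ℚ) n (psubst h f * psubst h g)
      = ∑ i ∈ Finset.range (n+1), ∑ j ∈ Finset.range (n+1),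
          coeff (R := ℚ) i f * coeff (R := ℚ) j g * coeff (R := ℚ) n (h ^ (i + j)) := by
    rw [PowerSeries.coeff_mul]
    have : ∀ p ∈ Finset.HasAntidiagonal.antidiagonal n,
        coeff (R := ℚ) p.1 (psubst h f) * coeff (R := ℚ) p.2 (psubst h g)
          = ∑ i ∈ Finset.range (n+1), ∑ j ∈ Finset.range (n+1),
              coeff (R := ℚ) i f * coeff (R := ℚ) j g * (coeff (R := ℚ) p.1 (h ^ i) * coeff (R := ℚ) p.2 (h ^ j)) := by
      intro p hp
      have hp' : p.1 + p.2 = n := Finset.HasAntidiagonal.mem_antidiagonal.mp hp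
      rw [coeff_psubst hh f (show p.1 < n + 1 by omega),
        coeff_psubst hh g (show p.2 < n + 1 by omega), Finset.sum_mul_sum]
      exact Finset.sum_congr rfl fun i _ => Finset.sum_congr rfl fun j _ => by ring
    rw [Finset.sum_congr rfl this, Finset.sum_comm]
    refine Finset.sum_congr rfl fun i _ => ?_
    rw [Finset.sum_comm]
    refine Finset.sum_congr rfl fun j _ => ?_
    rw [← Finset.mul_sum, key]
  rw [hR, coeff_psubst hh (f*g) (Nat.lt_succ_self n)]
  -- LHS
  have hL1 : ∀ k ∈ Finset.range (n+1), coeff (R := ℚ) k (f * g) * coeff (R := ℚ) n (h ^ k)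
      = ∑ p ∈ Finset.HasAntidiagonal.antidiagonal k, coeff (R := ℚ) p.1 f * coeff (R := ℚ) p.2 g * coeff (R := ℚ) n (h ^ (p.1 + p.2)) := by
    intro k _
    rw [PowerSeries.coeff_mul, Finset.sum_mul]
    refine Finset.sum_congr rfl fun p hp => ?_
    rw [Finset.HasAntidiagonal.mem_antidiagonal.mp hp]
  rw [Finset.sum_congr rfl hL1]
  -- now triangle vs square
  rw [Finset.sum_sigma', ← Finset.sum_product']
  set T : ℕ × ℕ → ℚ := fun p => coeff (R := ℚ) p.1 f * coeff (R := ℚ) p.2 g * coeff (R := ℚ) n (h ^ (p.1 + p.2)) with hT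
  have hsub : (Finset.range (n+1) ×ˢ Finset.range (n+1)).filter (fun p => p.1 + p.2 ≤ n)
      ⊆ Finset.range (n+1) ×ˢ Finset.range (n+1) := Finset.filter_subset _ _
  have hz : ∀ p ∈ Finset.range (n+1) ×ˢ Finset.range (n+1),
      p ∉ (Finset.range (n+1) ×ˢ Finset.range (n+1)).filter (fun p => p.1 + p.2 ≤ n) → T p = 0 := by
    intro p hp hp'
    have : ¬ (p.1 + p.2 ≤ n) := by
      intro hle
      exact hp' (Finset.mem_filter.mpr ⟨hp, hle⟩)
    rw [hT]
    simp only []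
    rw [coeff_pow_of_lt hh (by omega), mul_zero]
  rw [← Finset.sum_subset hsub hz]
  refine Finset.sum_nbij' (i := fun x => x.2) (j := fun p => ⟨p.1 + p.2, p⟩) ?_ ?_ ?_ ?_ ?_
  · rintro ⟨k, p⟩ hx
    simp only [Finset.mem_sigma, Finset.mem_range, Finset.HasAntidiagonal.mem_antidiagonal] at hx
    refine Finset.mem_filter.mpr ⟨Finset.mem_product.mpr ⟨?_, ?_⟩, ?_⟩ <;>
      simp only [Finset.mem_range] <;> omega
  · intro p hp
    simp only [Finset.mem_filter, Finset.mem_product, Finset.mem_range] at hp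
    refine Finset.mem_sigma.mpr ⟨?_, ?_⟩
    · simp only [Finset.mem_range]; omega
    · simp [Finset.HasAntidiagonal.mem_antidiagonal]
  · rintro ⟨k, p⟩ hx
    simp only [Finset.mem_sigma, Finset.mem_range, Finset.HasAntidiagonal.mem_antidiagonal] at hx
    show (⟨p.1 + p.2, p⟩ : (_ : ℕ) × ℕ × ℕ) = ⟨k, p⟩
    rw [show p.1 + p.2 = k from hx.2]
  · intro p _
    rfl
  · rintro ⟨k, p⟩ _
    rfl

lemma psubst_pow {h : PowerSeries ℚ} (hh : constantCoeff (R := ℚ) h = 0) (f : PowerSeries ℚ) (k : ℕ) :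
    psubst h (f ^ k) = (psubst h f) ^ k := by
  induction k with
  | zero => simpa using psubst_one h
  | succ k ih => rw [pow_succ, pow_succ, psubst_mul hh, ih]

lemma psubst_assoc {h g : PowerSeries ℚ} (hh : constantCoeff (R := ℚ) h = 0)
    (hg : constantCoeff (R := ℚ) g = 0) (f : PowerSeries ℚ) :
    psubst h (psubst g f) = psubst (psubst h g) f := by
  have hhg : constantCoeff (R := ℚ) (psubst h g) = 0 := by
    rw [constantCoeff_psubst hh, hg]
  ext n
  rw [coeff_psubst hhg f (Nat.lt_succ_self n), psubst, coeff_mk]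
  have step : ∀ m ∈ Finset.range (n+1), coeff (R := ℚ) m (psubst g f) * coeff (R := ℚ) n (h ^ m)
      = ∑ k ∈ Finset.range (n+1), coeff (R := ℚ) k f * (coeff (R := ℚ) m (g ^ k) * coeff (R := ℚ) n (h ^ m)) := by
    intro m hm
    rw [coeff_psubst hg f (Finset.mem_range.mp hm), Finset.sum_mul]
    exact Finset.sum_congr rfl fun k _ => by ring
  rw [Finset.sum_congr rfl step, Finset.sum_comm]
  refine Finset.sum_congr rfl fun k _ => ?_
  rw [← Finset.mul_sum]
  congr 1
  rw [← psubst_pow hh g k]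
  rw [psubst, coeff_mk]

lemma psubst_derivative {h : PowerSeries ℚ} (hh : constantCoeff (R := ℚ) h = 0) (f : PowerSeries ℚ) :
    d⁄dX ℚ (psubst h f) = psubst h (d⁄dX ℚ f) * d⁄dX ℚ h := by
  ext n
  rw [coeff_derivative, coeff_psubst hh f (show n + 1 < n + 2 by omega)]
  have hder : ∀ k : ℕ, coeff (R := ℚ) (n+1) (h ^ k) * (n+1) = k * coeff (R := ℚ) n (h ^ (k-1) * d⁄dX ℚ h) := by
    intro k
    have h1 : d⁄dX ℚ (h ^ k) = k • h ^ (k-1) • d⁄dX ℚ h := (d⁄dX ℚ).leibniz_pow h k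
    have h2 : coeff (R := ℚ) n (d⁄dX ℚ (h ^ k)) = k * coeff (R := ℚ) n (h ^ (k-1) * d⁄dX ℚ h) := by
      rw [h1, smul_eq_mul, nsmul_eq_mul, ← map_natCast (C (R := ℚ)) k, coeff_C_mul]
    rw [← h2, coeff_derivative]
  rw [Finset.sum_mul]
  have step : ∀ k ∈ Finset.range (n+2),
      coeff (R := ℚ) k f * coeff (R := ℚ) (n+1) (h ^ k) * (n+1)
        = coeff (R := ℚ) k f * (k * coeff (R := ℚ) n (h ^ (k-1) * d⁄dX ℚ h)) := by
    intro k _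
    rw [mul_assoc, hder k]
  rw [Finset.sum_congr rfl step, Finset.sum_range_succ']
  simp only [Nat.cast_zero, zero_mul, mul_zero, add_zero]
  rw [PowerSeries.coeff_mul]
  have hR : ∀ p ∈ Finset.HasAntidiagonal.antidiagonal n,
      coeff (R := ℚ) p.1 (psubst h (d⁄dX ℚ f)) * coeff (R := ℚ) p.2 (d⁄dX ℚ h)
        = ∑ k ∈ Finset.range (n+1),
            coeff (R := ℚ) (k+1) f * ((k+1) * (coeff (R := ℚ) p.1 (h ^ k) * coeff (R := ℚ) p.2 (d⁄dX ℚ h))) := by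
    intro p hp
    have hp' : p.1 + p.2 = n := Finset.HasAntidiagonal.mem_antidiagonal.mp hp
    rw [coeff_psubst hh _ (show p.1 < n + 1 by omega), Finset.sum_mul]
    refine Finset.sum_congr rfl fun k _ => ?_
    rw [coeff_derivative]
    ring
  rw [Finset.sum_congr rfl hR, Finset.sum_comm]
  refine Finset.sum_congr rfl fun k _ => ?_
  simp only [Nat.add_sub_cancel]
  rw [← Finset.mul_sum, ← Finset.mul_sum, ← PowerSeries.coeff_mul]
  push_cast
  ring

lemma derivative_exp : d⁄dX ℚ (exp ℚ) = exp ℚ := by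
  ext n
  rw [coeff_derivative, coeff_exp, coeff_exp]
  simp only [Algebra.algebraMap_self, RingHom.id_apply, Rat.cast_div]
  rw [Nat.factorial_succ]
  have h1 : ((n+1 : ℕ) : ℚ) ≠ 0 := by positivity
  have h2 : ((n.factorial : ℕ) : ℚ) ≠ 0 := Nat.cast_ne_zero.mpr n.factorial_ne_zero
  field_simp
  norm_cast

/-- Central binomial generating function. -/
noncomputable def Bq : PowerSeries ℚ := PowerSeries.mk fun n => (n.centralBinom : ℚ)

/-- Catalan generating function. -/
noncomputable def Cq : PowerSeries ℚ := PowerSeries.mk fun n => (catalan n : ℚ)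

lemma constantCoeff_gKP1 : constantCoeff (R := ℚ) gKP1 = 0 := by
  rw [← coeff_zero_eq_constantCoeff_apply, gKP1, coeff_mk]
  simp

lemma catEq : Cq = 1 + X * (Cq * Cq) := by
  ext n
  cases n with
  | zero => simp [Cq]
  | succ m =>
    rw [map_add, coeff_succ_X_mul, PowerSeries.coeff_mul]
    have h1 : coeff (R := ℚ) (m+1) (1 : ℚ⟦X⟧) = 0 := by simp
    rw [h1, zero_add, Cq, coeff_mk, catalan_succ' m]
    push_cast
    exact Finset.sum_congr rfl fun p _ => by rw [coeff_mk, coeff_mk]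

lemma binEq : Bq = Cq + X * d⁄dX ℚ Cq := by
  ext n
  cases n with
  | zero => simp [Bq, Cq, Nat.centralBinom]
  | succ m =>
    rw [map_add, coeff_succ_X_mul, coeff_derivative, Bq, Cq]
    simp only [coeff_mk]
    have hq : ((m+1+1 : ℕ) : ℚ) * (catalan (m+1) : ℚ) = ((m+1).centralBinom : ℚ) := by
      exact_mod_cast congrArg (Nat.cast : ℕ → ℚ) (succ_mul_catalan_eq_centralBinom (m+1))
    push_cast at hq ⊢
    linarith [hq]

lemma gEq : 2 * X * d⁄dX ℚ gKP1 = Bq - 1 := by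
  have hrw : 2 * X * d⁄dX ℚ gKP1 = X * (2 * d⁄dX ℚ gKP1) := by ring
  rw [hrw]
  ext n
  cases n with
  | zero =>
    simp [Bq, Nat.centralBinom]
  | succ m =>
    rw [coeff_succ_X_mul, map_sub, Bq, coeff_mk]
    have h1 : coeff (R := ℚ) (m+1) (1 : ℚ⟦X⟧) = 0 := by simp
    rw [h1, sub_zero]
    have h2 : coeff (R := ℚ) m (2 * d⁄dX ℚ gKP1) = 2 * (coeff (R := ℚ) (m+1) gKP1 * (m+1)) := by
      rw [show (2 : ℚ⟦X⟧) * d⁄dX ℚ gKP1 = d⁄dX ℚ gKP1 + d⁄dX ℚ gKP1 by ring, map_add,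
        coeff_derivative]
      ring
    rw [h2, gKP1, coeff_mk]
    simp only [Nat.succ_ne_zero, if_false]
    rw [show 2*(m+1)-1 = 2*m+1 from by omega]
    have hfac : ((m+1).centralBinom : ℚ) * ((m+1).factorial * (m+1).factorial)
        = ((2 * (m+1)).factorial : ℚ) := by
      have h6 := Nat.choose_mul_factorial_mul_factorial (show m+1 ≤ 2*(m+1) by omega)
      have h3 : 2*(m+1) - (m+1) = m+1 := by omega
      rw [h3] at h6
      have h5 : (m+1).centralBinom * ((m+1).factorial * (m+1).factorial)
          = (2*(m+1)).factorial := by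
        unfold Nat.centralBinom
        rw [← h6]; ring
      exact_mod_cast congrArg (Nat.cast : ℕ → ℚ) h5
    have hstep : ((2*(m+1)).factorial : ℚ) = 2 * ((m:ℚ)+1) * ((2*m+1).factorial : ℚ) := by
      rw [show 2*(m+1) = (2*m+1) + 1 from by omega, Nat.factorial_succ]
      push_cast
      ring
    have hne1 : ((m+1).factorial : ℚ) ≠ 0 := Nat.cast_ne_zero.mpr (Nat.factorial_ne_zero _)
    field_simp
    linear_combination -hfac - hstep

lemma pexp_two {w : PowerSeries ℚ} (hw : constantCoeff (R := ℚ) w = 0) :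
    pexp (2 * w) = pexp w * pexp w := by
  have hw2 : constantCoeff (R := ℚ) (2 * w) = 0 := by
    rw [map_mul, hw, mul_zero]
  have key : pexp (2 * w) = psubst w (exp ℚ ^ 2) := by
    ext n
    rw [pexp, coeff_psubst hw2 _ (Nat.lt_succ_self n), coeff_psubst hw _ (Nat.lt_succ_self n)]
    refine Finset.sum_congr rfl fun k _ => ?_
    have hlhs : coeff (R := ℚ) n ((2 * w) ^ k) = 2 ^ k * coeff (R := ℚ) n (w ^ k) := by
      rw [mul_pow, show ((2:ℚ⟦X⟧) ^ k) = C (R := ℚ) (2 ^ k) from by rw [map_pow, map_ofNat],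
        coeff_C_mul]
    have hrhs : coeff (R := ℚ) k (exp ℚ ^ 2) = 2 ^ k * coeff (R := ℚ) k (exp ℚ) := by
      rw [exp_pow_eq_rescale_exp, coeff_rescale]
      norm_num
    rw [hlhs, hrhs]
    push_cast
    ring
  rw [key, pow_two, psubst_mul hw]
  rfl

lemma pexp_psubst {h g : PowerSeries ℚ} (hh : constantCoeff (R := ℚ) h = 0)
    (hg : constantCoeff (R := ℚ) g = 0) : pexp (psubst h g) = psubst h (pexp g) := by
  rw [pexp, pexp, psubst_assoc hh hg]

lemma catODE : 2 * X * d⁄dX ℚ Cq = (Bq - 1) * Cq := by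
  have e3 : Cq = 1 + X * (Cq * Cq) := catEq
  have e2 : Bq = Cq + X * d⁄dX ℚ Cq := binEq
  have e1 : d⁄dX ℚ Cq = Cq * Cq + X * (Cq * d⁄dX ℚ Cq + Cq * d⁄dX ℚ Cq) := by
    conv_lhs => rw [e3]
    rw [map_add, show d⁄dX ℚ (1:ℚ⟦X⟧) = 0 from (d⁄dX ℚ).map_one_eq_zero, zero_add]
    have hmul : ∀ a b : ℚ⟦X⟧, d⁄dX ℚ (a * b) = a * d⁄dX ℚ b + b * d⁄dX ℚ a := by
      intro a b
      have := Derivation.leibniz (d⁄dX ℚ) a b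
      simpa [smul_eq_mul] using this
    rw [hmul X (Cq * Cq), hmul Cq Cq, derivative_X]
    ring
  linear_combination (X*Cq)*e1 - Cq*e2 - (Cq + 2*X*(d⁄dX ℚ Cq))*e3

lemma expODE : 2 * X * d⁄dX ℚ (pexp gKP1) = (Bq - 1) * pexp gKP1 := by
  rw [pexp, psubst_derivative constantCoeff_gKP1, derivative_exp, ← pexp]
  calc 2 * X * (pexp gKP1 * d⁄dX ℚ gKP1)
      = (2 * X * d⁄dX ℚ gKP1) * pexp gKP1 := by ring
    _ = (Bq - 1) * pexp gKP1 := by rw [gEq]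

lemma ODE_unique (y : PowerSeries ℚ) (h0 : constantCoeff (R := ℚ) y = 0)
    (hode : 2 * X * d⁄dX ℚ y = (Bq - 1) * y) : y = 0 := by
  ext n
  induction n using Nat.strong_induction_on with
  | _ n ih =>
    match n with
    | 0 => simpa [coeff_zero_eq_constantCoeff_apply] using h0
    | (m+1) =>
      have hc := congrArg (coeff (R := ℚ) (m+1)) hode
      have hL : coeff (R := ℚ) (m+1) (2 * X * d⁄dX ℚ y) = 2 * ((m:ℚ)+1+1-1) * coeff (R := ℚ) (m+1) y := by
        rw [show (2:ℚ⟦X⟧) * X * d⁄dX ℚ y = X * d⁄dX ℚ y + X * d⁄dX ℚ y from by ring, map_add,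
          coeff_succ_X_mul, coeff_derivative]
        push_cast
        ring
      have hR : coeff (R := ℚ) (m+1) ((Bq - 1) * y) = 0 := by
        rw [PowerSeries.coeff_mul]
        refine Finset.sum_eq_zero fun p hp => ?_
        have hp' : p.1 + p.2 = m + 1 := Finset.HasAntidiagonal.mem_antidiagonal.mp hp
        rcases Nat.eq_zero_or_pos p.1 with h01 | h01
        · have : coeff (R := ℚ) p.1 (Bq - 1) = 0 := by
            rw [h01, map_sub, Bq, coeff_mk]
            simp [Nat.centralBinom]
          rw [this, zero_mul]
        · have hlt : p.2 < m + 1 := by omega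
          rw [ih p.2 hlt]
          simp
      rw [hL, hR] at hc
      have hne : (2 * ((m:ℚ)+1+1-1)) ≠ 0 := by
        push_cast
        intro hcontra
        nlinarith [Nat.cast_nonneg (α := ℚ) m]
      have := mul_eq_zero.mp hc
      rcases this with h' | h'
      · exact absurd h' hne
      · simpa using h'

lemma EeqC : pexp gKP1 = Cq := by
  have h0 : constantCoeff (R := ℚ) (pexp gKP1 - Cq) = 0 := by
    rw [map_sub, pexp, constantCoeff_psubst constantCoeff_gKP1, constantCoeff_exp]
    have : constantCoeff (R := ℚ) Cq = 1 := by
      rw [← coeff_zero_eq_constantCoeff_apply, Cq, coeff_mk]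
      simp
    rw [this, sub_self]
  have hode : 2 * X * d⁄dX ℚ (pexp gKP1 - Cq) = (Bq - 1) * (pexp gKP1 - Cq) := by
    rw [map_sub]
    calc 2 * X * (d⁄dX ℚ (pexp gKP1) - d⁄dX ℚ Cq)
        = 2 * X * d⁄dX ℚ (pexp gKP1) - 2 * X * d⁄dX ℚ Cq := by ring
      _ = (Bq - 1) * pexp gKP1 - (Bq - 1) * Cq := by rw [expODE, catODE]
      _ = (Bq - 1) * (pexp gKP1 - Cq) := by ring
  have := ODE_unique _ h0 hode
  exact sub_eq_zero.mp this
  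
lemma key_facts {h : PowerSeries ℚ} (hh : constantCoeff (R := ℚ) h = 0) :
    pexp (psubst h gKP1) = psubst h Cq ∧
    psubst h Cq = 1 + h * (psubst h Cq * psubst h Cq) ∧
    pexp (2 * psubst h gKP1) = psubst h Cq * psubst h Cq := by
  have hg0 : constantCoeff (R := ℚ) (psubst h gKP1) = 0 := by
    rw [constantCoeff_psubst hh, constantCoeff_gKP1]
  have hF : pexp (psubst h gKP1) = psubst h Cq := by
    rw [pexp_psubst hh constantCoeff_gKP1, EeqC]
  refine ⟨hF, ?_, ?_⟩
  · conv_lhs => rw [catEq]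
    rw [psubst_add, psubst_one, psubst_mul hh, psubst_mul hh, psubst_X hh]
  · rw [pexp_two hg0, hF]

lemma part2 (h : PowerSeries ℚ) (hh : constantCoeff (R := ℚ) h = 0)
    (heqn : h * pexp (2 * psubst h gKP1) = X) :
    pexp (psubst h gKP1) = 1 + X := by
  obtain ⟨hF, hFeq, hsq⟩ := key_facts hh
  rw [hsq] at heqn
  rw [hF, hFeq]
  rw [show h * (psubst h Cq * psubst h Cq) = X from heqn]

end Stmt9

theorem stmt9 :
    (∃! h : PowerSeries ℚ,
      PowerSeries.constantCoeff (R := ℚ) h = 0 ∧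
        h * pexp (2 * psubst h gKP1) = PowerSeries.X) ∧
    (∀ h : PowerSeries ℚ,
      PowerSeries.constantCoeff (R := ℚ) h = 0 →
        h * pexp (2 * psubst h gKP1) = PowerSeries.X →
          pexp (psubst h gKP1) = 1 + PowerSeries.X) := by
  constructor
  · -- existence and uniqueness
    set u : ℚ⟦X⟧ := (1 + X) * (1 + X) with hu
    have hcu : constantCoeff (R := ℚ) u = 1 := by simp [hu]
    have hune : constantCoeff (R := ℚ) u ≠ 0 := by rw [hcu]; exact one_ne_zero
    have hu0 : u ≠ 0 := by
      intro hcontra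
      rw [hcontra, map_zero] at hcu
      exact zero_ne_one hcu
    set h₀ : ℚ⟦X⟧ := X * u⁻¹ with hh₀
    have h00 : constantCoeff (R := ℚ) h₀ = 0 := by
      rw [hh₀, map_mul, constantCoeff_X, zero_mul]
    have hXu : h₀ * u = X := by
      rw [hh₀, mul_assoc, PowerSeries.inv_mul_cancel u hune, mul_one]
    obtain ⟨hF, hFeq, hsq⟩ := Stmt9.key_facts h00
    have hF1X : psubst h₀ Stmt9.Cq = 1 + X := by
      set F := psubst h₀ Stmt9.Cq with hFdef
      have h1 : (1 + X : ℚ⟦X⟧) = 1 + h₀ * ((1+X) * (1+X)) := by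
        rw [show h₀ * ((1+X)*(1+X)) = h₀ * u from by rw [hu], hXu]
      have hdiff : F - (1 + X) = (h₀ * (F + (1 + X))) * (F - (1 + X)) := by
        calc F - (1+X) = (1 + h₀*(F*F)) - (1 + h₀*((1+X)*(1+X))) := by rw [← hFeq, ← h1]
          _ = (h₀ * (F + (1+X))) * (F - (1+X)) := by ring
      have hzero : (F - (1+X)) * (1 - h₀ * (F + (1+X))) = 0 := by
        linear_combination hdiff
      rcases mul_eq_zero.mp hzero with h' | h'
      · exact sub_eq_zero.mp h'
      · exfalso
        have hcc := congrArg (constantCoeff (R := ℚ)) h'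
        rw [map_sub, map_one, map_mul, h00, zero_mul, sub_zero, map_zero] at hcc
        exact one_ne_zero hcc
    have heq0 : h₀ * pexp (2 * psubst h₀ gKP1) = X := by
      rw [hsq, hF1X, ← hu]
      exact hXu
    refine ⟨h₀, ⟨h00, heq0⟩, ?_⟩
    rintro h' ⟨hc', heq'⟩
    obtain ⟨hF', hFeq', hsq'⟩ := Stmt9.key_facts hc'
    have hv' : pexp (psubst h' gKP1) = 1 + X := Stmt9.part2 h' hc' heq'
    have hFval : psubst h' Stmt9.Cq = 1 + X := by rw [← hF', hv']
    have : h' * u = h₀ * u := by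
      rw [hXu, ← heq', hsq', hFval, hu]
    exact mul_right_cancel₀ hu0 this
  · exact Stmt9.part2
end
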